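/- arXiv:2301.02545 — 2 statements merged into one kernel-verified Lean document; each statement's English description precedes it below -/
import Mathlib

section
/- Let I ⊆ S = k[x_1,…,x_n] be a homogeneous ideal (standard grading) with A = S/I a domain of Krull dimension d. Let C be a maximal cone in the Gröbner fan GF(I) whose monomial initial ideal init_C(I) contains no variable, and suppose C contains maximal prime cones τ_1,…,τ_q of trop(I) as d-dimensional faces, with associated Khovanskii-finite valuations ν_i := ν_{M_i} (M_i ∈ Q^{d×n} with rows a basis of the span of τ_i chosen among the rows of M below). Let M ∈ Q^{n_C×n} be the matrix whose rows r_1,…,r_{n_C} are generators of the lineality space L_I together with representatives of the primitive ray generators of C/L_I, and let B = B_C be the standard monomial basis of A determined by init_C(I). Define the B-Newton–Okounkov body Δ_B(A) := conv(⋃_{j≥1} {(1/j)·Ma : x^a a standard monomial of degree j}) ⊆ R^{n_C}. Then for each 1 ≤ i ≤ q there is a coordinate projection p_i : R^{n_C} → R^d (onto the coordinates indexed by the rows of M constituting M_i) such that p_i(Δ_B(A)) = Δ(A,ν_i), the Newton–Okounkov body of ν_i. -/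
/- STATEMENT 15: let `C` be a maximal Gröbner cone (with monomial initial ideal
containing no variable) of a homogeneous ideal `I` containing maximal prime cones
`τ_1,…,τ_q` of `trop(I)` as `d`-dimensional faces, let `M` be the matrix of
lineality generators and ray representatives of `C`, and let `B` be the standard
monomial basis.  Then for each `i` the coordinate projection `p_i` (onto the rows
of `M` spanning `τ_i`) maps the `B`-Newton–Okounkov body `Δ_B(A)` onto the
Newton–Okounkov body `Δ(A,ν_i)` of the valuation `ν_i` associated with `τ_i`. -/

open MvPolynomial
open scoped Classical

noncomputable section

def wdot {n : ℕ} (w : Fin n → ℝ) (a : Fin n →₀ ℕ) : ℝ := ∑ i, w i * (a i : ℝ)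

def initForm {k : Type*} [Field k] {n : ℕ} (w : Fin n → ℝ) (f : MvPolynomial (Fin n) k) :
    MvPolynomial (Fin n) k :=
  ∑ b ∈ f.support.filter (fun b => ∀ a ∈ f.support, wdot w a ≤ wdot w b),
    monomial b (coeff b f)

def initIdeal {k : Type*} [Field k] {n : ℕ} (w : Fin n → ℝ)
    (I : Ideal (MvPolynomial (Fin n) k)) : Ideal (MvPolynomial (Fin n) k) :=
  Ideal.span {g | ∃ f ∈ I, f ≠ 0 ∧ g = initForm w f}

def tropSet {k : Type*} [Field k] {n : ℕ} (I : Ideal (MvPolynomial (Fin n) k)) :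
    Set (Fin n → ℝ) :=
  {w | ∀ a : Fin n →₀ ℕ, monomial a (1 : k) ∉ initIdeal w I}

def gfCone {k : Type*} [Field k] {n : ℕ} (I : Ideal (MvPolynomial (Fin n) k))
    (w : Fin n → ℝ) : Set (Fin n → ℝ) :=
  closure {v | initIdeal v I = initIdeal w I}

def IsTermOrder {σ : Type*} (tle : (σ →₀ ℕ) → (σ →₀ ℕ) → Prop) : Prop :=
  IsLinearOrder (σ →₀ ℕ) tle ∧ (∀ a, tle 0 a) ∧
    (∀ a b c : σ →₀ ℕ, tle a b → tle (a + c) (b + c))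

def leadForm {k : Type*} [Field k] {σ : Type*} (tle : (σ →₀ ℕ) → (σ →₀ ℕ) → Prop)
    (f : MvPolynomial σ k) : MvPolynomial σ k :=
  ∑ b ∈ f.support.filter (fun b => ∀ a ∈ f.support, tle a b),
    monomial b (coeff b f)

def leadIdeal {k : Type*} [Field k] {σ : Type*} (tle : (σ →₀ ℕ) → (σ →₀ ℕ) → Prop)
    (I : Ideal (MvPolynomial σ k)) : Ideal (MvPolynomial σ k) :=
  Ideal.span {g | ∃ f ∈ I, f ≠ 0 ∧ g = leadForm tle f}

def Mdot {d n : ℕ} (M : Fin d → Fin n → ℚ) (a : Fin n →₀ ℕ) : Fin d → ℚ :=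
  fun t => ∑ j, M t j * (a j : ℚ)

def tildeValIs {k : Type*} [Field k] {d n : ℕ} (le : (Fin d → ℚ) → (Fin d → ℚ) → Prop)
    (M : Fin d → Fin n → ℚ) (f : MvPolynomial (Fin n) k) (v : Fin d → ℚ) : Prop :=
  (∃ b ∈ f.support, Mdot M b = v) ∧ ∀ a ∈ f.support, le (Mdot M a) v

def quasiValIs {k : Type*} [Field k] {d n : ℕ} (le : (Fin d → ℚ) → (Fin d → ℚ) → Prop)
    (M : Fin d → Fin n → ℚ) (I : Ideal (MvPolynomial (Fin n) k))
    (x : MvPolynomial (Fin n) k ⧸ I) (v : Fin d → ℚ) : Prop :=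
  (∃ f, f ≠ 0 ∧ Ideal.Quotient.mk I f = x ∧ tildeValIs le M f v) ∧
  (∀ f u, f ≠ 0 → Ideal.Quotient.mk I f = x → tildeValIs le M f u → le v u)

/-- The Newton–Okounkov body `Δ(A,ν) = closure conv {ν(f)/j : f ∈ A_j ∖ {0}, j ≥ 1}`. -/
def NObody {k : Type*} [Field k] {d n : ℕ} (I : Ideal (MvPolynomial (Fin n) k))
    (ν : (MvPolynomial (Fin n) k ⧸ I) → (Fin d → ℚ)) : Set (Fin d → ℝ) :=
  closure (convexHull ℝ {x | ∃ j : ℕ, 0 < j ∧ ∃ f : MvPolynomial (Fin n) k,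
    (∀ a ∈ f.support, (∑ i, a i) = j) ∧ Ideal.Quotient.mk I f ≠ 0 ∧
    x = (j : ℝ)⁻¹ • (fun t => (ν (Ideal.Quotient.mk I f) t : ℝ))})

/-- The `B`-Newton–Okounkov body `Δ_B(A) = conv {M·a/deg(a) : x^a a standard
monomial of positive degree}`. -/
def DeltaB {k : Type*} [Field k] {N n : ℕ} (I : Ideal (MvPolynomial (Fin n) k))
    (w₀ : Fin n → ℝ) (M : Fin N → Fin n → ℚ) : Set (Fin N → ℝ) :=
  convexHull ℝ {x | ∃ a : Fin n →₀ ℕ, monomial a (1 : k) ∉ initIdeal w₀ I ∧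
    0 < ∑ j, a j ∧
    x = ((∑ j, a j : ℕ) : ℝ)⁻¹ • (fun i => ∑ j, (M i j : ℝ) * (a j : ℝ))}

/-! Both sides are the convex hull of the columns `M_i e_l` of the weighting matrix
`M_i = (M (ρ i t))_t`. A normalized exponent `M_i a / deg a` is a convex combination of these
columns, and the columns themselves are attained by the variables: in `Δ_B(A)` because the
variables are standard monomials, in `Δ(A, ν_i)` because `I` contains no linear form, so `x_l`
is its only degree-one representative. Conversely, homogeneity of `I` lets one cut a
representative realising `ν_i` of a class of degree `j` down to degree `j`, so the value is
`M_i b` with `deg b = j` and `ν_i / j` lies in the hull. -/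

theorem Finset.exists_forall_rel_image {α β : Type*} {r : β → β → Prop} [IsTrans β r]
    [Std.Total r] (f : α → β) {s : Finset α} (hs : s.Nonempty) :
    ∃ b ∈ s, ∀ a ∈ s, r (f a) (f b) := by
  let _ : Preorder β :=
    { le := r, le_refl := fun x => (total_of r x x).elim id id, le_trans := fun _ _ _ => trans_of r }
  obtain ⟨b, hb, hmax⟩ := s.exists_maximalFor f hs
  exact ⟨b, hb, fun a ha => (total_of r (f a) (f b)).elim id (hmax ha)⟩

namespace MvPolynomial

theorem isHomogeneous_iff_forall_sum_eq {σ R : Type*} [Fintype σ] [CommSemiring R]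
    {φ : MvPolynomial σ R} {n : ℕ} :
    φ.IsHomogeneous n ↔ ∀ a ∈ φ.support, ∑ i, a i = n := by
  simp only [IsHomogeneous, IsWeightedHomogeneous, mem_support_iff, Pi.one_def,
    ← Finsupp.degree_eq_weight_one, Finsupp.degree_eq_sum]

theorem leadForm_eq_monomial {k σ : Type*} [Field k] {tle : (σ →₀ ℕ) → (σ →₀ ℕ) → Prop}
    (hterm : IsTermOrder tle) {g : MvPolynomial σ k} (hg : g ≠ 0) :
    ∃ b ∈ g.support, leadForm tle g = monomial b (coeff b g) := by
  have := hterm.1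
  obtain ⟨b, hb, hmax⟩ := Finset.exists_forall_rel_image (r := tle) id (support_nonempty.mpr hg)
  have hlead : g.support.filter (fun b' => ∀ a ∈ g.support, tle a b') = {b} := by
    ext c
    simp only [Finset.mem_filter, Finset.mem_singleton]
    constructor
    · rintro ⟨hc, hcmax⟩
      exact antisymm (hmax c hc) (hcmax b hb)
    · rintro rfl
      exact ⟨hb, hmax⟩
  exact ⟨b, hb, by rw [leadForm, hlead, Finset.sum_singleton]⟩

theorem eq_zero_of_mem_of_isHomogeneous_one {k σ : Type*} [Field k]
    {tle : (σ →₀ ℕ) → (σ →₀ ℕ) → Prop} (hterm : IsTermOrder tle) {I : Ideal (MvPolynomial σ k)}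
    (hnovar : ∀ j, X j ∉ leadIdeal tle I) {g : MvPolynomial σ k} (hgI : g ∈ I)
    (hg : g.IsHomogeneous 1) : g = 0 := by
  by_contra hg0
  obtain ⟨b, hb, hlead⟩ := leadForm_eq_monomial hterm hg0
  have hcoeff : coeff b g ≠ 0 := mem_support_iff.mp hb
  have hdeg : b.degree = 1 := by
    rw [Finsupp.degree_eq_weight_one, ← Pi.one_def]
    exact hg hcoeff
  obtain ⟨m, hm⟩ : b ∈ Set.range fun m => Finsupp.single m 1 := Finsupp.range_single_one ▸ hdeg
  have hmem : monomial b (coeff b g) ∈ leadIdeal tle I := by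
    rw [← hlead]
    exact Ideal.subset_span ⟨g, hgI, hg0, rfl⟩
  have hX := Ideal.mul_mem_left _ (C (coeff b g)⁻¹) hmem
  rw [C_mul_monomial, inv_mul_cancel₀ hcoeff, ← hm] at hX
  exact hnovar m hX

end MvPolynomial

section ColumnPolytope

variable {m n : ℕ}

def normalizedMdot (M : Fin m → Fin n → ℚ) (a : Fin n →₀ ℕ) : Fin m → ℝ :=
  ((∑ j, a j : ℕ) : ℝ)⁻¹ • fun i => ∑ j, (M i j : ℝ) * (a j : ℝ)

def columnPolytope (M : Fin m → Fin n → ℚ) : Set (Fin m → ℝ) :=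
  convexHull ℝ (Set.range fun l i => (M i l : ℝ))

theorem normalizedMdot_eq_smul_Mdot (M : Fin m → Fin n → ℚ) (a : Fin n →₀ ℕ) :
    normalizedMdot M a = ((∑ j, a j : ℕ) : ℝ)⁻¹ • fun i => (Mdot M a i : ℝ) := by
  simp only [normalizedMdot, Mdot, Rat.cast_sum, Rat.cast_mul, Rat.cast_natCast]

theorem normalizedMdot_single (M : Fin m → Fin n → ℚ) (l : Fin n) :
    normalizedMdot M (Finsupp.single l 1) = fun i => (M i l : ℝ) := by
  funext i
  simp [normalizedMdot, Finsupp.single_apply]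

theorem normalizedMdot_mem_columnPolytope (M : Fin m → Fin n → ℚ) {a : Fin n →₀ ℕ}
    (ha : 0 < ∑ j, a j) : normalizedMdot M a ∈ columnPolytope M := by
  have hdeg : ∑ l, (a l : ℝ) = ((∑ j, a j : ℕ) : ℝ) := by push_cast; rfl
  have hcenter : normalizedMdot M a =
      Finset.univ.centerMass (fun l => (a l : ℝ)) fun l i => (M i l : ℝ) := by
    rw [Finset.centerMass, hdeg, normalizedMdot]
    congr 1
    funext i
    simp [Finset.sum_apply, mul_comm]
  rw [hcenter]
  exact Finset.centerMass_mem_convexHull _ (fun l _ => by positivity)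
    (by rw [hdeg]; exact_mod_cast ha) fun l _ => Set.mem_range_self l

theorem convexHull_image_normalizedMdot (M : Fin m → Fin n → ℚ) {S : Set (Fin n →₀ ℕ)}
    (hsingle : ∀ l, Finsupp.single l 1 ∈ S) (hpos : ∀ a ∈ S, 0 < ∑ j, a j) :
    convexHull ℝ (normalizedMdot M '' S) = columnPolytope M := by
  refine (convexHull_min ?_ (convex_convexHull ℝ _)).antisymm (convexHull_mono ?_)
  · rintro _ ⟨a, ha, rfl⟩
    exact normalizedMdot_mem_columnPolytope M (hpos a ha)
  · rintro _ ⟨l, rfl⟩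
    exact ⟨_, hsingle l, normalizedMdot_single M l⟩

end ColumnPolytope

theorem DeltaB_eq_convexHull_image {k : Type*} [Field k] {N n : ℕ}
    (I : Ideal (MvPolynomial (Fin n) k)) (w₀ : Fin n → ℝ) (M : Fin N → Fin n → ℚ) :
    DeltaB I w₀ M = convexHull ℝ
      (normalizedMdot M '' {a | monomial a (1 : k) ∉ initIdeal w₀ I ∧ 0 < ∑ j, a j}) := by
  rw [DeltaB]
  congr 1
  ext x
  simp only [Set.mem_ofPred_eq, Set.mem_image, normalizedMdot, and_assoc, eq_comm]

theorem image_DeltaB_eq_columnPolytope {k : Type*} [Field k] {m N n : ℕ}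
    {I : Ideal (MvPolynomial (Fin n) k)} {w₀ : Fin n → ℝ} (hnovar : ∀ j, X j ∉ initIdeal w₀ I)
    (M : Fin N → Fin n → ℚ) (ρ : Fin m → Fin N) :
    (fun x : Fin N → ℝ => fun t => x (ρ t)) '' DeltaB I w₀ M =
      columnPolytope fun t => M (ρ t) := by
  rw [DeltaB_eq_convexHull_image]
  refine ((LinearMap.funLeft ℝ ℝ ρ).image_convexHull _).trans ?_
  rw [Set.image_image]
  exact convexHull_image_normalizedMdot _ (fun l => ⟨hnovar l, by simp [Finsupp.single_apply]⟩)
    fun a ha => ha.2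

section QuasiValuation

variable {k : Type*} [Field k] {d n : ℕ} {le : (Fin d → ℚ) → (Fin d → ℚ) → Prop}
  [IsLinearOrder (Fin d → ℚ) le] {M : Fin d → Fin n → ℚ} {I : Ideal (MvPolynomial (Fin n) k)}

theorem mk_X_ne_zero (hlinear : ∀ g ∈ I, g.IsHomogeneous 1 → g = 0) (l : Fin n) :
    Ideal.Quotient.mk I (X l) ≠ 0 := fun hX =>
  X_ne_zero l (hlinear _ (Ideal.Quotient.eq_zero_iff_mem.mp hX) (isHomogeneous_X k l))

/-- Cutting an optimal representative down to its degree-`j` component keeps it a representative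
(as `I` is homogeneous) and cannot raise its largest weight. -/
theorem quasiValIs.exists_isHomogeneous_rep
    (hIhom : ∀ f ∈ I, ∀ j : ℕ, homogeneousComponent j f ∈ I) {f : MvPolynomial (Fin n) k}
    {j : ℕ} (hf : f.IsHomogeneous j) (hf0 : Ideal.Quotient.mk I f ≠ 0) {v : Fin d → ℚ}
    (hv : quasiValIs le M I (Ideal.Quotient.mk I f) v) :
    ∃ g, Ideal.Quotient.mk I g = Ideal.Quotient.mk I f ∧ g.IsHomogeneous j ∧
      ∃ b ∈ g.support, Mdot M b = v := by
  obtain ⟨⟨h, -, hhf, -, hmax⟩, hmin⟩ := hv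
  set g := homogeneousComponent j h
  have hgf : Ideal.Quotient.mk I g = Ideal.Quotient.mk I f := by
    rw [Ideal.Quotient.eq] at hhf ⊢
    simpa only [map_sub, homogeneousComponent_eq_self hf] using hIhom _ hhf j
  have hg0 : g ≠ 0 := fun hg => hf0 (by rw [← hgf, hg, map_zero])
  obtain ⟨b, hb, hbmax⟩ :=
    Finset.exists_forall_rel_image (r := le) (Mdot M) (support_nonempty.mpr hg0)
  have hbh : b ∈ h.support := by
    rw [support_homogeneousComponent] at hb
    exact (Finset.mem_filter.mp hb).1
  exact ⟨g, hgf, homogeneousComponent_isHomogeneous j h, b, hb,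
    antisymm (hmax b hbh) (hmin g _ hg0 hgf ⟨⟨b, hb, rfl⟩, hbmax⟩)⟩

theorem quasiValIs.eq_Mdot_single (hIhom : ∀ f ∈ I, ∀ j : ℕ, homogeneousComponent j f ∈ I)
    (hlinear : ∀ g ∈ I, g.IsHomogeneous 1 → g = 0) (l : Fin n) {v : Fin d → ℚ}
    (hv : quasiValIs le M I (Ideal.Quotient.mk I (X l)) v) :
    v = Mdot M (Finsupp.single l 1) := by
  obtain ⟨g, hgX, hg, b, hb, rfl⟩ :=
    hv.exists_isHomogeneous_rep hIhom (isHomogeneous_X k l) (mk_X_ne_zero hlinear l)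
  have hg_eq : g = X l :=
    sub_eq_zero.mp (hlinear _ (Ideal.Quotient.eq.mp hgX) (hg.sub (isHomogeneous_X k l)))
  rw [hg_eq, support_X, Finset.mem_singleton] at hb
  rw [hb]

theorem NObody_eq_columnPolytope (hIhom : ∀ f ∈ I, ∀ j : ℕ, homogeneousComponent j f ∈ I)
    (hlinear : ∀ g ∈ I, g.IsHomogeneous 1 → g = 0) {ν : MvPolynomial (Fin n) k ⧸ I → Fin d → ℚ}
    (hν : ∀ x, x ≠ 0 → quasiValIs le M I x (ν x)) :
    NObody I ν = columnPolytope M := by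
  refine (closure_minimal (convexHull_min ?_ (convex_convexHull ℝ _))
    ((Set.finite_range _).isClosed_convexHull (𝕜 := ℝ))).antisymm
    (convexHull_min ?_ (convex_convexHull ℝ _).closure)
  · rintro _ ⟨j, hj, f, hfj, hf0, rfl⟩
    obtain ⟨g, -, hg, b, hb, hbv⟩ := (hν _ hf0).exists_isHomogeneous_rep hIhom
      (isHomogeneous_iff_forall_sum_eq.mpr hfj) hf0
    have hbj : ∑ i, b i = j := isHomogeneous_iff_forall_sum_eq.mp hg b hb
    rw [← hbv, ← hbj, ← normalizedMdot_eq_smul_Mdot]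
    exact normalizedMdot_mem_columnPolytope M (hbj ▸ hj)
  · rintro _ ⟨l, rfl⟩
    have hX0 := mk_X_ne_zero hlinear l
    refine subset_closure (subset_convexHull ℝ _ ⟨1, one_pos, X l,
      isHomogeneous_iff_forall_sum_eq.mp (isHomogeneous_X k l), hX0, ?_⟩)
    have hdeg : ∑ j, (Finsupp.single l 1 : Fin n →₀ ℕ) j = 1 := by simp [Finsupp.single_apply]
    dsimp only
    rw [← normalizedMdot_single, normalizedMdot_eq_smul_Mdot, hdeg,
      (hν _ hX0).eq_Mdot_single hIhom hlinear l]

end QuasiValuation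

theorem B_newton_polytope_projects_to_newton_okounkov_bodies_general
    {k : Type*} [Field k] {n N d q : ℕ}
    (I : Ideal (MvPolynomial (Fin n) k))
    -- `I` is homogeneous (standard grading):
    (hIhom : ∀ f ∈ I, ∀ j : ℕ, MvPolynomial.homogeneousComponent j f ∈ I)
    -- `C = gfCone I w₀` is a maximal Gröbner cone, compatible with a term order:
    (tle : (Fin n →₀ ℕ) → (Fin n →₀ ℕ) → Prop) (hterm : IsTermOrder tle)
    (w₀ : Fin n → ℝ) (hmono : initIdeal w₀ I = leadIdeal tle I)
    -- `init_C(I)` contains no variable: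
    (hnovar : ∀ j : Fin n, X j ∉ initIdeal w₀ I)
    (M : Fin N → Fin n → ℚ)
    (ρ : Fin q → Fin d → Fin N)
    -- a translation-invariant total order on `ℚ^d`:
    (le : (Fin d → ℚ) → (Fin d → ℚ) → Prop)
    (hlin : IsLinearOrder (Fin d → ℚ) le)
    -- `ν_i` is the (Khovanskii-finite) valuation with weighting matrix the
    -- selected rows of `M`:
    (ν : Fin q → ((MvPolynomial (Fin n) k ⧸ I) → (Fin d → ℚ)))
    (hν : ∀ i x, x ≠ 0 → quasiValIs le (fun t j => M (ρ i t) j) I x (ν i x)) :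
    -- then the coordinate projection `p_i` maps `Δ_B(A)` onto `Δ(A,ν_i)`:
    ∀ i : Fin q,
      (fun x : Fin N → ℝ => fun t : Fin d => x (ρ i t)) '' DeltaB (k := k) I w₀ M =
        NObody I (ν i) := by
  intro i
  have hnolead : ∀ j, X j ∉ leadIdeal tle I := fun j => hmono ▸ hnovar j
  have hlinear : ∀ g ∈ I, g.IsHomogeneous 1 → g = 0 := fun g hgI hg =>
    eq_zero_of_mem_of_isHomogeneous_one hterm hnolead hgI hg
  rw [image_DeltaB_eq_columnPolytope hnovar, NObody_eq_columnPolytope hIhom hlinear (hν i)]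

theorem B_newton_polytope_projects_to_newton_okounkov_bodies
    {k : Type*} [Field k] [IsAlgClosed k] [CharZero k] {n N d q : ℕ}
    (I : Ideal (MvPolynomial (Fin n) k)) [IsDomain (MvPolynomial (Fin n) k ⧸ I)]
    -- `I` is homogeneous (standard grading):
    (hIhom : ∀ f ∈ I, ∀ j : ℕ, MvPolynomial.homogeneousComponent j f ∈ I)
    -- `A = S/I` has Krull dimension `d`:
    (hdim : ringKrullDim (MvPolynomial (Fin n) k ⧸ I) = d)
    -- `C = gfCone I w₀` is a maximal Gröbner cone, compatible with a term order:
    (tle : (Fin n →₀ ℕ) → (Fin n →₀ ℕ) → Prop) (hterm : IsTermOrder tle)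
    (w₀ : Fin n → ℝ) (hmono : initIdeal w₀ I = leadIdeal tle I)
    -- `init_C(I)` contains no variable:
    (hnovar : ∀ j : Fin n, X j ∉ initIdeal w₀ I)
    -- the rows of `M` (lineality generators and ray representatives) lie in `C`
    -- and together with the lineality space generate `C`:
    (M : Fin N → Fin n → ℚ)
    (hrows : ∀ i, (fun j => (M i j : ℝ)) ∈ gfCone I w₀)
    (hCgen : gfCone I w₀ = {x : Fin n → ℝ | ∃ l : Fin n → ℝ, initIdeal l I = I ∧
      ∃ c : Fin N → ℝ, (∀ i, 0 ≤ c i) ∧ x = l + ∑ i, c i • (fun j => (M i j : ℝ))})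
    -- `τ_1,…,τ_q` are maximal prime cones of `trop(I)`, `d`-dimensional faces of `C`:
    (w : Fin q → Fin n → ℝ)
    (hwtrop : ∀ i, w i ∈ tropSet (k := k) I)
    (hwprime : ∀ i, (initIdeal (w i) I).IsPrime)
    (hface : ∀ i, gfCone I (w i) ⊆ gfCone I w₀)
    (hτdim : ∀ i, Module.finrank ℝ ↥(Submodule.span ℝ (gfCone I (w i))) = d)
    -- for each `i`, the rows `ρ i 0, …, ρ i (d-1)` of `M` span `τ_i`:
    (ρ : Fin q → Fin d → Fin N) (hρ : ∀ i, Function.Injective (ρ i))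
    (hspan : ∀ i, Submodule.span ℝ (Set.range fun t => fun j => (M (ρ i t) j : ℝ)) =
      Submodule.span ℝ (gfCone I (w i)))
    -- a translation-invariant total order on `ℚ^d`:
    (le : (Fin d → ℚ) → (Fin d → ℚ) → Prop)
    (hlin : IsLinearOrder (Fin d → ℚ) le)
    (hcompat : ∀ u v x : Fin d → ℚ, le u v → le (u + x) (v + x))
    -- `ν_i` is the (Khovanskii-finite) valuation with weighting matrix the
    -- selected rows of `M`:
    (ν : Fin q → ((MvPolynomial (Fin n) k ⧸ I) → (Fin d → ℚ)))
    (hν : ∀ i x, x ≠ 0 → quasiValIs le (fun t j => M (ρ i t) j) I x (ν i x)) :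
    -- then the coordinate projection `p_i` maps `Δ_B(A)` onto `Δ(A,ν_i)`:
    ∀ i : Fin q,
      (fun x : Fin N → ℝ => fun t : Fin d => x (ρ i t)) '' DeltaB (k := k) I w₀ M =
        NObody I (ν i) :=
  B_newton_polytope_projects_to_newton_okounkov_bodies_general I hIhom tle hterm w₀ hmono hnovar M ρ
    le hlin ν hν
end
end

section
/- Let I ⊆ S = k[x_1,…,x_n] be a homogeneous ideal, C a maximal cone of the Gröbner fan GF(I) with compatible term order < and reduced Gröbner basis G of I with respect to <, and let M ∈ Q^{n_C×n} be a matrix whose rows r_1,…,r_{n_C} ∈ C project to the primitive ray generators of C modulo the lineality space. For f = Σ_a c_a x^a ∈ I define μ_M(f) := (max{r_i·a : c_a ≠ 0})_{i=1,…,n_C} and the lift f̃_M := Σ_a c_a x^a t^{−Ma+μ_M(f)} ∈ S[t_1,…,t_{n_C}], and let Ĩ_M := (f̃_M : f ∈ I). Let ≪ be the term order on S[t_1,…,t_{n_C}] given by x^α t^λ ≪ x^β t^μ iff x^α < x^β, or x^α = x^β and t^λ <_lex t^μ. Then {g̃_M : g ∈ G} is a Gröbner basis of Ĩ_M with respect to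 ≪, i.e. the leading terms of the lifted elements g̃_M generate init_≪(Ĩ_M). -/
/- STATEMENT 16 (BMN, Prop 3.9): for a maximal Gröbner cone `C` of a homogeneous
ideal `I` with compatible term order `<` and reduced Gröbner basis `G`, and a
matrix `M` of integral representatives of the ray generators of `C` (mod
lineality), the lifts `g̃_M` of the elements `g ∈ G` form a Gröbner basis of the
lifted ideal `Ĩ_M ⊆ S[t_1,…,t_N]` with respect to the order `≪` (compare
`x`-parts by `<`, break ties lexicographically in the `t`-parts). -/

open MvPolynomial
open scoped Classical

noncomputable section

def rdotZ {n : ℕ} (r : Fin n → ℤ) (a : Fin n →₀ ℕ) : ℤ := ∑ j, r j * (a j : ℤ)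

/-- `μ_M(f)_i = max {r_i·a : c_a ≠ 0}`. -/
def muM {k : Type*} [Field k] {N n : ℕ} (M : Fin N → Fin n → ℤ)
    (f : MvPolynomial (Fin n) k) (i : Fin N) : ℤ :=
  WithBot.unbotD 0 ((f.support.image fun a => rdotZ (M i) a).max)

/-- The exponent (in `S[t_1,…,t_N]`) of the lift of the term of `f` with exponent
`a`: the `t_i`-exponent is `μ_M(f)_i − r_i·a`. -/
def liftExp {k : Type*} [Field k] {N n : ℕ} (M : Fin N → Fin n → ℤ)
    (f : MvPolynomial (Fin n) k) (a : Fin n →₀ ℕ) : (Fin n ⊕ Fin N) →₀ ℕ :=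
  Finsupp.equivFunOnFinite.symm
    (Sum.elim (fun j => a j) (fun i => (muM M f i - rdotZ (M i) a).toNat))

/-- The lift `f̃_M = Σ_a c_a x^a t^{−M·a + μ_M(f)} ∈ S[t_1,…,t_N]`. -/
def liftPoly {k : Type*} [Field k] {N n : ℕ} (M : Fin N → Fin n → ℤ)
    (f : MvPolynomial (Fin n) k) : MvPolynomial (Fin n ⊕ Fin N) k :=
  ∑ a ∈ f.support, monomial (liftExp M f a) (coeff a f)

/-- The lifted ideal `Ĩ_M = (f̃_M : f ∈ I)`. -/
def liftIdeal {k : Type*} [Field k] {N n : ℕ} (M : Fin N → Fin n → ℤ)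
    (I : Ideal (MvPolynomial (Fin n) k)) : Ideal (MvPolynomial (Fin n ⊕ Fin N) k) :=
  Ideal.span {g | ∃ f ∈ I, g = liftPoly M f}

/-- The `x`-part of an exponent in `S[t_1,…,t_N]`. -/
def xpart {N n : ℕ} (α : (Fin n ⊕ Fin N) →₀ ℕ) : Fin n →₀ ℕ :=
  Finsupp.equivFunOnFinite.symm fun j => α (Sum.inl j)

/-- The `t`-part of an exponent in `S[t_1,…,t_N]`. -/
def tpart {N n : ℕ} (α : (Fin n ⊕ Fin N) →₀ ℕ) : Fin N → ℕ :=
  fun i => α (Sum.inr i)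

/-- Strict lexicographic order on `t`-exponents. -/
def lexTLt {N : ℕ} (lam mu : Fin N → ℕ) : Prop :=
  ∃ i : Fin N, (∀ j, j < i → lam j = mu j) ∧ lam i < mu i

/-- The term order `≪` on `S[t_1,…,t_N]`:
`x^α t^λ ≪ x^β t^μ` iff `x^α < x^β`, or `x^α = x^β` and `t^λ ≤_lex t^μ`. -/
def lleOrder {N n : ℕ} (tle : (Fin n →₀ ℕ) → (Fin n →₀ ℕ) → Prop)
    (α β : (Fin n ⊕ Fin N) →₀ ℕ) : Prop :=
  (tle (xpart α) (xpart β) ∧ xpart α ≠ xpart β) ∨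
    (xpart α = xpart β ∧ (lexTLt (tpart α) (tpart β) ∨ tpart α = tpart β))


/-! The rows of `M` lie in the closure of the open Gröbner cone, on which `init_v(I) = init_<(I)`.
For `g ∈ G` the `v`-initial form of `g` lies in the monomial ideal `init_<(I)`, and reducedness
leaves only the leading exponent `b` of `g` as a `v`-maximal exponent; by continuity every row
of `M` is maximised on the support of `g` at `b`. So `μ_M(g) = M b`, and the `≪`-leading term of
`g̃_M` is the untwisted `x^b`.

Conversely, `Ĩ_M` is homogeneous for the `ℤ^N`-grading `deg(x^a t^λ) = M a + λ`, every lift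
being homogeneous of degree `μ_M(f)`. Given `h ∈ Ĩ_M` with `≪`-leading exponent `γ`, take the
component of `h` of degree `deg γ` and set `t = 1`: since within one degree the `x`-part of an
exponent determines its `t`-part, this gives `f ∈ I` with `<`-leading term `c x^{xpart γ}`.
Hence `init_≪(Ĩ_M) ⊆ init_<(I) · S[t]`, which is generated by the leading terms of the lifts. -/

theorem Finset.exists_max_of_isLinearOrder {α : Type*} {r : α → α → Prop} [IsLinearOrder α r]
    {s : Finset α} (hs : s.Nonempty) : ∃ b ∈ s, ∀ a ∈ s, r a b := by
  induction hs using Finset.Nonempty.cons_induction with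
  | singleton a => exact ⟨a, by simp, by simpa using refl_of r a⟩
  | cons a s ha hs ih =>
    obtain ⟨b, hb, hmax⟩ := ih
    rcases total_of r a b with hab | hba
    · exact ⟨b, by simp [hb], by simpa [hab] using hmax⟩
    · exact ⟨a, by simp, by simpa [refl_of r a] using fun c hc => trans_of r (hmax c hc) hba⟩

theorem leadForm_eq_monomial {k σ : Type*} [Field k] {r : (σ →₀ ℕ) → (σ →₀ ℕ) → Prop}
    [Std.Antisymm r] {f : MvPolynomial σ k} {b : σ →₀ ℕ} (hb : b ∈ f.support)
    (hmax : ∀ a ∈ f.support, r a b) : leadForm r f = monomial b (coeff b f) := by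
  have : {c ∈ f.support | ∀ a ∈ f.support, r a c} = {b} := by
    ext c
    simp only [Finset.mem_filter, Finset.mem_singleton]
    exact ⟨fun ⟨hc, hcmax⟩ => antisymm (hmax c hc) (hcmax b hb), fun h => h ▸ ⟨hb, hmax⟩⟩
  rw [leadForm, this, Finset.sum_singleton]

section LexOrder

variable {n N : ℕ} {tle : (Fin n →₀ ℕ) → (Fin n →₀ ℕ) → Prop}

theorem xpart_apply (α : (Fin n ⊕ Fin N) →₀ ℕ) (j : Fin n) : xpart α j = α (Sum.inl j) := rfl

theorem eq_of_xpart_eq_of_tpart_eq {α β : (Fin n ⊕ Fin N) →₀ ℕ} (hx : xpart α = xpart β)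
    (ht : tpart α = tpart β) : α = β := by
  ext (j | i)
  · exact DFunLike.congr_fun hx j
  · exact congrFun ht i

-- `lexTLt` is `Pi.Lex (· < ·) (· < ·)`, the strict order of `Lex (Fin N → ℕ)`.
theorem lleOrder_iff (α β : (Fin n ⊕ Fin N) →₀ ℕ) :
    lleOrder tle α β ↔ (tle (xpart α) (xpart β) ∧ xpart α ≠ xpart β) ∨
      (xpart α = xpart β ∧ toLex (tpart α) ≤ toLex (tpart β)) := by
  rw [lleOrder, le_iff_lt_or_eq]
  rfl

instance lleOrder.isLinearOrder [IsLinearOrder (Fin n →₀ ℕ) tle] :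
    IsLinearOrder ((Fin n ⊕ Fin N) →₀ ℕ) (lleOrder tle) where
  refl α := by simp [lleOrder_iff]
  trans α β γ := by
    simp only [lleOrder_iff]
    have := @IsTrans.trans _ tle _ (xpart α) (xpart β) (xpart γ)
    have := @antisymm_of _ tle _ (xpart α) (xpart β)
    grind
  antisymm α β := by
    simp only [lleOrder_iff]
    have := @antisymm_of _ tle _ (xpart α) (xpart β)
    have := @eq_of_xpart_eq_of_tpart_eq _ _ α β
    have := @toLex_inj _ (tpart α) (tpart β)
    grind
  total α β := by
    simp only [lleOrder_iff]
    have := total_of tle (xpart α) (xpart β)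
    grind

theorem lleOrder.tle_xpart [Std.Refl tle] {α β : (Fin n ⊕ Fin N) →₀ ℕ} (h : lleOrder tle α β) :
    tle (xpart α) (xpart β) := by
  rcases h with h | ⟨h, -⟩
  · exact h.1
  · exact h ▸ refl_of tle _

end LexOrder

section Lift

variable {k : Type*} [Field k] {N n : ℕ} (M : Fin N → Fin n → ℤ)

theorem xpart_liftExp (f : MvPolynomial (Fin n) k) (a : Fin n →₀ ℕ) :
    xpart (liftExp M f a) = a := by
  ext j
  rfl

theorem tpart_liftExp (f : MvPolynomial (Fin n) k) (a : Fin n →₀ ℕ) (i : Fin N) :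
    tpart (liftExp M f a) i = (muM M f i - rdotZ (M i) a).toNat := rfl

theorem liftExp_injective (f : MvPolynomial (Fin n) k) : Function.Injective (liftExp M f) :=
  fun a b h => by rw [← xpart_liftExp M f a, h, xpart_liftExp]

theorem coeff_liftPoly_liftExp (f : MvPolynomial (Fin n) k) (a : Fin n →₀ ℕ) :
    coeff (liftExp M f a) (liftPoly M f) = coeff a f := by
  simp [liftPoly, coeff_sum, coeff_monomial, (liftExp_injective M f).eq_iff, eq_comm]

theorem support_liftPoly_subset (f : MvPolynomial (Fin n) k) :
    (liftPoly M f).support ⊆ f.support.image (liftExp M f) := by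
  intro β hβ
  obtain ⟨a, ha, hβa⟩ := Finset.mem_biUnion.mp (support_sum hβ)
  exact Finset.mem_image.mpr ⟨a, ha, (Finset.mem_singleton.mp (support_monomial_subset hβa)).symm⟩

theorem liftPoly_ne_zero {f : MvPolynomial (Fin n) k} (hf : f ≠ 0) : liftPoly M f ≠ 0 := by
  obtain ⟨a, ha⟩ := ne_zero_iff.mp hf
  exact ne_zero_iff.mpr ⟨liftExp M f a, by rwa [coeff_liftPoly_liftExp]⟩

theorem rdotZ_le_muM (f : MvPolynomial (Fin n) k) {a : Fin n →₀ ℕ} (ha : a ∈ f.support)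
    (i : Fin N) : rdotZ (M i) a ≤ muM M f i := by
  have hmem := Finset.mem_image_of_mem (fun a => rdotZ (M i) a) ha
  rw [muM, ← Finset.coe_max' ⟨_, hmem⟩, WithBot.unbotD_coe]
  exact Finset.le_max' _ _ hmem

theorem muM_eq_of_forall_le (f : MvPolynomial (Fin n) k) {b : Fin n →₀ ℕ} (hb : b ∈ f.support)
    (i : Fin N) (hmax : ∀ a ∈ f.support, rdotZ (M i) a ≤ rdotZ (M i) b) :
    muM M f i = rdotZ (M i) b :=
  le_antisymm (by
    rw [muM, ← Finset.coe_max' ⟨_, Finset.mem_image_of_mem _ hb⟩, WithBot.unbotD_coe]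
    exact Finset.max'_le _ _ _ (by simpa using hmax)) (rdotZ_le_muM M f hb i)

theorem liftExp_eq_mapDomain_inl (f : MvPolynomial (Fin n) k) {b : Fin n →₀ ℕ}
    (hmu : ∀ i, muM M f i = rdotZ (M i) b) : liftExp M f b = b.mapDomain Sum.inl := by
  ext (j | i)
  · rw [Finsupp.mapDomain_apply Sum.inl_injective]
    rfl
  · rw [Finsupp.mapDomain_of_notMem_range _ _ (by simp)]
    simp [liftExp, hmu]

theorem leadForm_liftPoly {tle : (Fin n →₀ ℕ) → (Fin n →₀ ℕ) → Prop} [IsLinearOrder _ tle]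
    {f : MvPolynomial (Fin n) k} {b : Fin n →₀ ℕ} (hb : b ∈ f.support)
    (hmax : ∀ a ∈ f.support, tle a b)
    (hrow : ∀ i, ∀ a ∈ f.support, rdotZ (M i) a ≤ rdotZ (M i) b) :
    leadForm (lleOrder tle) (liftPoly M f) = rename Sum.inl (leadForm tle f) := by
  have hbmem : liftExp M f b ∈ (liftPoly M f).support := by
    rwa [mem_support_iff, coeff_liftPoly_liftExp, ← mem_support_iff]
  have hmax' : ∀ β ∈ (liftPoly M f).support, lleOrder tle β (liftExp M f b) := by
    intro β hβ
    obtain ⟨a, ha, rfl⟩ := Finset.mem_image.mp (support_liftPoly_subset M f hβ)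
    rcases eq_or_ne a b with rfl | hab
    · exact refl _
    · exact Or.inl <| by simpa only [xpart_liftExp] using ⟨hmax a ha, hab⟩
  have hmu i : muM M f i = rdotZ (M i) b := muM_eq_of_forall_le M f hb i (hrow i)
  rw [leadForm_eq_monomial hbmem hmax', leadForm_eq_monomial hb hmax, rename_monomial,
    coeff_liftPoly_liftExp, liftExp_eq_mapDomain_inl M f hmu]

end Lift

section Grading

variable {k : Type*} [Field k] {N n : ℕ} (M : Fin N → Fin n → ℤ)

def liftWeight : Fin n ⊕ Fin N → Fin N → ℤ :=
  Sum.elim (fun j i => M i j) (fun i => Pi.single i 1)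

theorem weight_liftWeight_apply (α : (Fin n ⊕ Fin N) →₀ ℕ) (i : Fin N) :
    Finsupp.weight (liftWeight M) α i = tpart α i + rdotZ (M i) (xpart α) := by
  rw [Finsupp.weight_apply, Finsupp.sum_fintype _ _ (by simp), Finset.sum_apply,
    Fintype.sum_sum_type]
  simp [liftWeight, rdotZ, tpart, xpart_apply, Pi.single_apply, mul_comm, add_comm]

theorem weight_liftExp (f : MvPolynomial (Fin n) k) {a : Fin n →₀ ℕ} (ha : a ∈ f.support) :
    Finsupp.weight (liftWeight M) (liftExp M f a) = muM M f := by
  funext i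
  rw [weight_liftWeight_apply, tpart_liftExp, xpart_liftExp,
    Int.toNat_of_nonneg (sub_nonneg.mpr (rdotZ_le_muM M f ha i)), sub_add_cancel]

theorem isWeightedHomogeneous_liftPoly (f : MvPolynomial (Fin n) k) :
    IsWeightedHomogeneous (liftWeight M) (liftPoly M f) (muM M f) := by
  intro β hβ
  obtain ⟨a, ha, rfl⟩ := Finset.mem_image.mp (support_liftPoly_subset M f (mem_support_iff.mpr hβ))
  exact weight_liftExp M f ha

theorem eq_of_weight_eq_of_xpart_eq {α β : (Fin n ⊕ Fin N) →₀ ℕ}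
    (hw : Finsupp.weight (liftWeight M) α = Finsupp.weight (liftWeight M) β)
    (hx : xpart α = xpart β) : α = β := by
  refine eq_of_xpart_eq_of_tpart_eq hx (funext fun i => ?_)
  have := congrFun hw i
  rw [weight_liftWeight_apply, weight_liftWeight_apply, hx] at this
  exact_mod_cast add_right_cancel this

attribute [local instance] weightedGradedAlgebra in
theorem liftIdeal_isHomogeneous (I : Ideal (MvPolynomial (Fin n) k)) :
    (liftIdeal M I).IsHomogeneous (weightedHomogeneousSubmodule k (liftWeight M)) :=
  Ideal.homogeneous_span _ _ fun _ ⟨f, _, hf⟩ => hf ▸ ⟨muM M f, isWeightedHomogeneous_liftPoly M f⟩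

attribute [local instance] weightedGradedAlgebra in
theorem weightedHomogeneousComponent_mem_liftIdeal (I : Ideal (MvPolynomial (Fin n) k))
    {h : MvPolynomial (Fin n ⊕ Fin N) k} (hh : h ∈ liftIdeal M I) (d : Fin N → ℤ) :
    weightedHomogeneousComponent (liftWeight M) d h ∈ liftIdeal M I :=
  weightedHomogeneousComponent_mem_of_mem k _ (liftIdeal_isHomogeneous M I) hh d

end Grading

section Dehomogenization

variable {k : Type*} [Field k] {N n : ℕ} (M : Fin N → Fin n → ℤ)

def dehomogenize : MvPolynomial (Fin n ⊕ Fin N) k →ₐ[k] MvPolynomial (Fin n) k :=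
  aeval (Sum.elim X 1)

theorem dehomogenize_monomial (α : (Fin n ⊕ Fin N) →₀ ℕ) (c : k) :
    dehomogenize (monomial α c) = monomial (xpart α) c := by
  rw [dehomogenize, aeval_monomial, monomial_eq, Finsupp.prod_fintype _ _ (by simp),
    Finsupp.prod_fintype _ _ (by simp), Fintype.prod_sum_type]
  simp [xpart_apply]

theorem dehomogenize_liftPoly (f : MvPolynomial (Fin n) k) :
    dehomogenize (liftPoly M f) = f := by
  simp only [liftPoly, map_sum, dehomogenize_monomial, xpart_liftExp]
  exact (as_sum f).symm

theorem liftIdeal_le_comap_dehomogenize (I : Ideal (MvPolynomial (Fin n) k)) :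
    liftIdeal M I ≤ I.comap dehomogenize :=
  Ideal.span_le.mpr fun _ ⟨f, hf, h⟩ => by
    rw [h, SetLike.mem_coe, Ideal.mem_comap, dehomogenize_liftPoly]
    exact hf

theorem coeff_dehomogenize (p : MvPolynomial (Fin n ⊕ Fin N) k) (b : Fin n →₀ ℕ) :
    coeff b (dehomogenize p) = ∑ α ∈ p.support with xpart α = b, coeff α p := by
  conv_lhs => rw [as_sum p]
  simp only [map_sum, dehomogenize_monomial, coeff_sum, coeff_monomial, Finset.sum_filter]

theorem support_dehomogenize_subset (p : MvPolynomial (Fin n ⊕ Fin N) k) :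
    (dehomogenize p).support ⊆ p.support.image xpart := by
  intro b hb
  rw [mem_support_iff, coeff_dehomogenize] at hb
  obtain ⟨α, hα, -⟩ := Finset.exists_ne_zero_of_sum_ne_zero hb
  obtain ⟨hαp, rfl⟩ := Finset.mem_filter.mp hα
  exact Finset.mem_image_of_mem _ hαp

theorem coeff_dehomogenize_of_isWeightedHomogeneous {p : MvPolynomial (Fin n ⊕ Fin N) k}
    {γ : (Fin n ⊕ Fin N) →₀ ℕ}
    (hp : IsWeightedHomogeneous (liftWeight M) p (Finsupp.weight (liftWeight M) γ)) :
    coeff (xpart γ) (dehomogenize p) = coeff γ p := by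
  rw [coeff_dehomogenize, Finset.sum_eq_single γ]
  · intro α hα hne
    obtain ⟨hα, hx⟩ := Finset.mem_filter.mp hα
    exact absurd (eq_of_weight_eq_of_xpart_eq M (hp (mem_support_iff.mp hα)) hx) hne
  · intro hγ
    simpa using hγ

end Dehomogenization

section LeadingIdeal

variable {k : Type*} [Field k] {N n : ℕ} (M : Fin N → Fin n → ℤ)
  {tle : (Fin n →₀ ℕ) → (Fin n →₀ ℕ) → Prop} [IsLinearOrder (Fin n →₀ ℕ) tle]

theorem exists_leadForm_eq_of_mem_liftIdeal {I : Ideal (MvPolynomial (Fin n) k)}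
    {h : MvPolynomial (Fin n ⊕ Fin N) k} (hh : h ∈ liftIdeal M I)
    {γ : (Fin n ⊕ Fin N) →₀ ℕ} (hγ : γ ∈ h.support) (hmax : ∀ α ∈ h.support, lleOrder tle α γ) :
    ∃ f ∈ I, f ≠ 0 ∧ leadForm tle f = monomial (xpart γ) (coeff γ h) := by
  set h' := weightedHomogeneousComponent (liftWeight M) (Finsupp.weight (liftWeight M) γ) h
  have hcoeff : coeff (xpart γ) (dehomogenize h') = coeff γ h := by
    rw [coeff_dehomogenize_of_isWeightedHomogeneous M
      (weightedHomogeneousComponent_isWeightedHomogeneous _ _), coeff_weightedHomogeneousComponent,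
      if_pos rfl]
  have hmem : xpart γ ∈ (dehomogenize h').support := by
    rwa [mem_support_iff, hcoeff, ← mem_support_iff]
  have hle : ∀ a ∈ (dehomogenize h').support, tle a (xpart γ) := by
    intro a ha
    obtain ⟨α, hα, rfl⟩ := Finset.mem_image.mp (support_dehomogenize_subset h' ha)
    rw [support_weightedHomogeneousComponent, Finset.mem_filter] at hα
    exact (hmax α hα.1).tle_xpart
  refine ⟨dehomogenize h', liftIdeal_le_comap_dehomogenize M I
    (weightedHomogeneousComponent_mem_liftIdeal M I hh _),
    ne_zero_iff.mpr ⟨_, mem_support_iff.mp hmem⟩, ?_⟩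
  rw [leadForm_eq_monomial hmem hle, hcoeff]

theorem leadIdeal_liftIdeal_le_map_rename (I : Ideal (MvPolynomial (Fin n) k)) :
    leadIdeal (lleOrder tle) (liftIdeal M I) ≤ (leadIdeal tle I).map (rename Sum.inl) := by
  refine Ideal.span_le.mpr ?_
  rintro _ ⟨h, hh, hh0, rfl⟩
  obtain ⟨γ, hγ, hmax⟩ :=
    Finset.exists_max_of_isLinearOrder (r := lleOrder tle) (support_nonempty.mpr hh0)
  obtain ⟨f, hf, hf0, hlead⟩ := exists_leadForm_eq_of_mem_liftIdeal M hh hγ hmax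
  have hx : (xpart γ).mapDomain Sum.inl ≤ γ := by
    rintro (j | i)
    · rw [Finsupp.mapDomain_apply Sum.inl_injective]
      rfl
    · rw [Finsupp.mapDomain_of_notMem_range _ _ (by simp)]
      exact Nat.zero_le _
  have hsplit : monomial γ (coeff γ h) =
      monomial (γ - (xpart γ).mapDomain Sum.inl) 1 * rename Sum.inl (leadForm tle f) := by
    rw [hlead, rename_monomial, monomial_mul, one_mul, tsub_add_cancel_of_le hx]
  rw [SetLike.mem_coe, leadForm_eq_monomial hγ hmax, hsplit]
  exact Ideal.mul_mem_left _ _ (Ideal.mem_map_of_mem _ (Ideal.subset_span ⟨f, hf, hf0, rfl⟩))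

end LeadingIdeal

section GroebnerCone

variable {k : Type*} [Field k] {n : ℕ}

theorem monomial_mem_span_monomial_of_mem_support {σ : Type*} {s : Set (σ →₀ ℕ)}
    {p : MvPolynomial σ k} (hp : p ∈ Ideal.span ((fun s => monomial s (1 : k)) '' s))
    {a : σ →₀ ℕ} (ha : a ∈ p.support) :
    monomial a (1 : k) ∈ Ideal.span ((fun s => monomial s (1 : k)) '' s) := by
  rw [mem_ideal_span_monomial_image] at hp ⊢
  intro a' ha'
  rw [support_monomial, if_neg one_ne_zero, Finset.mem_singleton] at ha'
  exact ha' ▸ hp a ha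

theorem wdot_le_of_initForm_mem {s : Set (Fin n →₀ ℕ)} {v : Fin n → ℝ}
    {g : MvPolynomial (Fin n) k} {b : Fin n →₀ ℕ} (hg : g ≠ 0)
    (hinit : initForm v g ∈ Ideal.span ((fun s => monomial s (1 : k)) '' s))
    (hred : ∀ a ∈ g.support, a ≠ b →
      monomial a (1 : k) ∉ Ideal.span ((fun s => monomial s (1 : k)) '' s)) :
    ∀ a ∈ g.support, wdot v a ≤ wdot v b := by
  obtain ⟨a', ha', hmax⟩ := Finset.exists_max_image g.support (wdot v) (support_nonempty.mpr hg)
  have ha'init : a' ∈ (initForm v g).support := by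
    rw [mem_support_iff, initForm, coeff_sum]
    simp only [coeff_monomial, Finset.sum_ite_eq', Finset.mem_filter, if_pos (And.intro ha' hmax)]
    exact mem_support_iff.mp ha'
  obtain rfl : a' = b := by
    by_contra hne
    exact hred a' ha' hne (monomial_mem_span_monomial_of_mem_support hinit ha'init)
  exact hmax

theorem wdot_intCast (r : Fin n → ℤ) (a : Fin n →₀ ℕ) :
    wdot (fun j => (r j : ℝ)) a = rdotZ r a := by
  simp [wdot, rdotZ]

theorem continuous_wdot (a : Fin n →₀ ℕ) : Continuous fun v : Fin n → ℝ => wdot v a := by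
  unfold wdot
  fun_prop

theorem rdotZ_le_of_mem_closure {U : Set (Fin n → ℝ)} {r : Fin n → ℤ} {a b : Fin n →₀ ℕ}
    (hr : (fun j => (r j : ℝ)) ∈ closure U) (hU : ∀ v ∈ U, wdot v a ≤ wdot v b) :
    rdotZ r a ≤ rdotZ r b := by
  have : wdot (fun j => (r j : ℝ)) a ≤ wdot (fun j => (r j : ℝ)) b :=
    closure_minimal hU (isClosed_le (continuous_wdot a) (continuous_wdot b)) hr
  rwa [wdot_intCast, wdot_intCast, Int.cast_le] at this

end GroebnerCone

theorem lifted_groebner_basis_general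
    {k : Type*} [Field k] {n N : ℕ}
    (I : Ideal (MvPolynomial (Fin n) k))
    -- a term order `<`:
    (tle : (Fin n →₀ ℕ) → (Fin n →₀ ℕ) → Prop) (hterm : IsTermOrder tle)
    -- `C = gfCone I w₀` is a maximal Gröbner cone compatible with `<`:
    (w₀ : Fin n → ℝ) (hmono : initIdeal w₀ I = leadIdeal tle I)
    -- the rows of `M` lie in `C` and, together with the lineality space
    -- `L_I = {l : init_l(I) = I}`, generate `C` (i.e. they represent the
    -- primitive ray generators of `C` modulo `L_I`):
    (M : Fin N → Fin n → ℤ)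
    (hrows : ∀ i, (fun j => (M i j : ℝ)) ∈ gfCone I w₀)
    -- `G` is the reduced Gröbner basis of `I` with respect to `<`:
    (G : Finset (MvPolynomial (Fin n) k))
    (hGI : (G : Set (MvPolynomial (Fin n) k)) ⊆ I)
    (hG0 : ∀ g ∈ G, g ≠ 0)
    (hGB : leadIdeal tle I =
      Ideal.span ((fun g => leadForm tle g) '' (G : Set (MvPolynomial (Fin n) k))))
    (hred : ∀ g ∈ G, ∃ b₀, (b₀ ∈ g.support ∧ ∀ a ∈ g.support, tle a b₀) ∧
      coeff b₀ g = 1 ∧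
      ∀ a ∈ g.support, a ≠ b₀ → monomial a (1 : k) ∉ leadIdeal tle I) :
    -- then the lifts of the elements of `G` form a Gröbner basis of `Ĩ_M`
    -- with respect to `≪`:
    leadIdeal (lleOrder tle) (liftIdeal M I) =
      Ideal.span {h | ∃ g ∈ G, h = leadForm (lleOrder tle) (liftPoly M g)} := by
  have := hterm.1
  choose! lead hlead hcoeff hred using hred
  have hleadForm : ∀ g ∈ G, leadForm tle g = monomial (lead g) 1 := fun g hg => by
    rw [leadForm_eq_monomial (hlead g hg).1 (hlead g hg).2, hcoeff g hg]
  have hmonomial :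
      leadIdeal tle I = Ideal.span ((fun s => monomial s (1 : k)) '' (lead '' G)) := by
    rw [hGB, Set.image_image]
    exact congrArg _ (Set.image_congr hleadForm)
  have hrow : ∀ g ∈ G, ∀ i, ∀ a ∈ g.support, rdotZ (M i) a ≤ rdotZ (M i) (lead g) := by
    intro g hg i a ha
    refine rdotZ_le_of_mem_closure (hrows i) (fun v hv => ?_)
    refine wdot_le_of_initForm_mem (hG0 g hg) ?_ (hmonomial ▸ hred g hg) a ha
    rw [← hmonomial, ← hmono, ← hv]
    exact Ideal.subset_span ⟨g, hGI hg, hG0 g hg, rfl⟩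
  have hliftLead : ∀ g ∈ G,
      leadForm (lleOrder tle) (liftPoly M g) = rename Sum.inl (leadForm tle g) :=
    fun g hg => leadForm_liftPoly M (hlead g hg).1 (hlead g hg).2 (hrow g hg)
  apply le_antisymm
  · refine (leadIdeal_liftIdeal_le_map_rename M I).trans ?_
    rw [hGB, Ideal.map_span, Ideal.span_le]
    rintro _ ⟨_, ⟨g, hg, rfl⟩, rfl⟩
    exact Ideal.subset_span ⟨g, hg, (hliftLead g hg).symm⟩
  · rw [Ideal.span_le]
    rintro _ ⟨g, hg, rfl⟩
    exact Ideal.subset_span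
      ⟨_, Ideal.subset_span ⟨g, hGI hg, rfl⟩, liftPoly_ne_zero M (hG0 g hg), rfl⟩

theorem lifted_groebner_basis
    {k : Type*} [Field k] {n N : ℕ}
    (I : Ideal (MvPolynomial (Fin n) k))
    -- `I` is homogeneous:
    (hIhom : ∀ f ∈ I, ∀ j : ℕ, MvPolynomial.homogeneousComponent j f ∈ I)
    -- a term order `<`:
    (tle : (Fin n →₀ ℕ) → (Fin n →₀ ℕ) → Prop) (hterm : IsTermOrder tle)
    -- `C = gfCone I w₀` is a maximal Gröbner cone compatible with `<`:
    (w₀ : Fin n → ℝ) (hmono : initIdeal w₀ I = leadIdeal tle I)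
    -- the rows of `M` lie in `C` and, together with the lineality space
    -- `L_I = {l : init_l(I) = I}`, generate `C` (i.e. they represent the
    -- primitive ray generators of `C` modulo `L_I`):
    (M : Fin N → Fin n → ℤ)
    (hrows : ∀ i, (fun j => (M i j : ℝ)) ∈ gfCone I w₀)
    (hCgen : gfCone I w₀ = {x : Fin n → ℝ | ∃ l : Fin n → ℝ, initIdeal l I = I ∧
      ∃ c : Fin N → ℝ, (∀ i, 0 ≤ c i) ∧ x = l + ∑ i, c i • (fun j => (M i j : ℝ))})
    -- `G` is the reduced Gröbner basis of `I` with respect to `<`: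
    (G : Finset (MvPolynomial (Fin n) k))
    (hGI : (G : Set (MvPolynomial (Fin n) k)) ⊆ I)
    (hG0 : ∀ g ∈ G, g ≠ 0)
    (hGB : leadIdeal tle I =
      Ideal.span ((fun g => leadForm tle g) '' (G : Set (MvPolynomial (Fin n) k))))
    (hred : ∀ g ∈ G, ∃ b₀, (b₀ ∈ g.support ∧ ∀ a ∈ g.support, tle a b₀) ∧
      coeff b₀ g = 1 ∧
      ∀ a ∈ g.support, a ≠ b₀ → monomial a (1 : k) ∉ leadIdeal tle I) :
    -- then the lifts of the elements of `G` form a Gröbner basis of `Ĩ_M`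
    -- with respect to `≪`:
    leadIdeal (lleOrder tle) (liftIdeal M I) =
      Ideal.span {h | ∃ g ∈ G, h = leadForm (lleOrder tle) (liftPoly M g)} :=
  lifted_groebner_basis_general I tle hterm w₀ hmono M hrows G hGI hG0 hGB hred
end
end
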